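/- arXiv:0912.2577 — 3 statements merged into one kernel-verified Lean document; each statement's English description precedes it below -/
import Mathlib

section
/- Let g(ν) = ν^d + d·ν^{d-1}(1-ν) and suppose ν* ∈ (0,1) satisfies g(ν*) > ν*. If α ∈ (0,1) satisfies 1-α > ν*/g(ν*), and a sequence (ν_r) satisfies ν_0 = 1 and ν_r ≥ (1-α)·g(ν_{r-1}) for all r ≥ 1, then ν_r ≥ ν* for all r ≥ 0. -/
/-!
Since `g' = d (d - 1) x ^ (d - 2) (1 - x) ≥ 0`, `g` is increasing on `[0, 1]`, so by induction
`ν* ≤ (1 - α) g(ν*) ≤ (1 - α) g(ν_r) ≤ ν_{r+1}`.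
-/

open Set

/-- The probability that at least `d - 1` of `d` independent events of probability `x` occur. -/
noncomputable def stableChildrenProb (d : ℕ) (x : ℝ) : ℝ :=
  x ^ d + d * x ^ (d - 1) * (1 - x)

lemma hasDerivAt_stableChildrenProb (d : ℕ) (x : ℝ) :
    HasDerivAt (stableChildrenProb d) (d * (d - 1 : ℕ) * x ^ (d - 1 - 1) * (1 - x)) x := by
  have h := (hasDerivAt_pow d x).add
    (((hasDerivAt_pow (d - 1) x).const_mul (d : ℝ)).mul ((hasDerivAt_id x).const_sub 1))
  exact h.congr_deriv (by simp only [id]; ring)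

lemma monotoneOn_stableChildrenProb (d : ℕ) : MonotoneOn (stableChildrenProb d) (Icc 0 1) := by
  apply monotoneOn_of_deriv_nonneg (convex_Icc 0 1)
  · exact fun x _ => (hasDerivAt_stableChildrenProb d x).continuousAt.continuousWithinAt
  · exact fun x _ => (hasDerivAt_stableChildrenProb d x).differentiableAt.differentiableWithinAt
  · intro x hx
    rw [interior_Icc] at hx
    rw [(hasDerivAt_stableChildrenProb d x).deriv]
    have hx0 : 0 ≤ x ^ (d - 1 - 1) := pow_nonneg hx.1.le _
    have hx1 : 0 ≤ 1 - x := by linarith [hx.2]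
    positivity

lemma le_of_le_recursion_of_monotoneOn {h : ℝ → ℝ} {x₀ b : ℝ} {ν : ℕ → ℝ}
    (hmono : MonotoneOn h (Icc x₀ b)) (hfix : x₀ ≤ h x₀) (h0 : x₀ ≤ ν 0)
    (hub : ∀ r, ν r ≤ b) (hrec : ∀ r, h (ν r) ≤ ν (r + 1)) (r : ℕ) : x₀ ≤ ν r := by
  induction r with
  | zero => exact h0
  | succ n ih =>
    have hx₀b : x₀ ≤ b := ih.trans (hub n)
    calc x₀ ≤ h x₀ := hfix
      _ ≤ h (ν n) := hmono ⟨le_rfl, hx₀b⟩ ⟨ih, hub n⟩ ih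
      _ ≤ ν (n + 1) := hrec n

theorem stmt2_general (d : ℕ) (νs α : ℝ) (ν : ℕ → ℝ)
    (hνs0 : 0 < νs) (hνs1 : νs < 1)
    (hg : νs ^ d + d * νs ^ (d - 1) * (1 - νs) > νs)
    (hαg : 1 - α > νs / (νs ^ d + d * νs ^ (d - 1) * (1 - νs)))
    (h0 : ν 0 = 1) (hub : ∀ r, ν r ≤ 1)
    (hrec : ∀ r : ℕ, 1 ≤ r →
      ν r ≥ (1 - α) * ((ν (r - 1)) ^ d + d * (ν (r - 1)) ^ (d - 1) * (1 - ν (r - 1)))) :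
    ∀ r : ℕ, ν r ≥ νs := by
  change stableChildrenProb d νs > νs at hg
  change 1 - α > νs / stableChildrenProb d νs at hαg
  have hgpos : 0 < stableChildrenProb d νs := hνs0.trans hg
  have hc : 0 ≤ 1 - α := (div_pos hνs0 hgpos).le.trans hαg.le
  have hfix : νs ≤ (1 - α) * stableChildrenProb d νs := by
    rw [gt_iff_lt, div_lt_iff₀ hgpos] at hαg
    exact hαg.le
  have hmono : MonotoneOn (fun x => (1 - α) * stableChildrenProb d x) (Icc νs 1) :=
    fun x hx y hy hxy => mul_le_mul_of_nonneg_left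
      (monotoneOn_stableChildrenProb d (Icc_subset_Icc_left hνs0.le hx)
        (Icc_subset_Icc_left hνs0.le hy) hxy) hc
  refine le_of_le_recursion_of_monotoneOn hmono hfix (h0 ▸ hνs1.le) hub fun r => ?_
  have h := hrec (r + 1) r.succ_pos
  rwa [Nat.add_sub_cancel] at h

/-- If g(ν*) > ν* with ν* ∈ (0,1), α ∈ (0,1) with 1-α > ν*/g(ν*), and a
sequence (ν_r) of probabilities satisfies ν_0 = 1 and ν_r ≥ (1-α)·g(ν_{r-1}) for r ≥ 1,
then ν_r ≥ ν* for all r, where g(ν) = ν^d + d·ν^{d-1}(1-ν). -/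
theorem stmt2 (d : ℕ) (hd : 3 ≤ d) (νs α : ℝ) (ν : ℕ → ℝ)
    (hνs0 : 0 < νs) (hνs1 : νs < 1)
    (hg : νs ^ d + d * νs ^ (d - 1) * (1 - νs) > νs)
    (hα0 : 0 < α) (hα1 : α < 1)
    (hαg : 1 - α > νs / (νs ^ d + d * νs ^ (d - 1) * (1 - νs)))
    (h0 : ν 0 = 1) (hub : ∀ r, ν r ≤ 1)
    (hrec : ∀ r : ℕ, 1 ≤ r →
      ν r ≥ (1 - α) * ((ν (r - 1)) ^ d + d * (ν (r - 1)) ^ (d - 1) * (1 - ν (r - 1)))) :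
    ∀ r : ℕ, ν r ≥ νs :=
  stmt2_general d νs α ν hνs0 hνs1 hg hαg h0 hub hrec
end

section
/- Let Maj : {0,1,♯}^d → {0,1} (d odd) return the majority over non-♯ entries (coin flip on ties). Define the recursive majority against an adversary on the d-ary tree of height H: the root has state 0; a single site evolves without indels down a (d-2)-ary subtree where each edge flips the bit independently with probability p_s; the remaining 2 children at each internal node (and all their descendants' leaves) are adversarially set to 1; the output is the d-wise recursive majority of the leaf states. Then for every β > 0 there exists a constant C'' > 0 such that if (1-2p_s)² > C''·(log d)/d and d is sufficiently large, the probability that the recursive majority equals 0 is at least 1-β, uniformly in H. -/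
/-- Probability that Bin(n,r) = i. -/
noncomputable def binProb (n : ℕ) (r : ℝ) (i : ℕ) : ℝ :=
  (n.choose i : ℝ) * r ^ i * (1 - r) ^ (n - i)

/-- Probability that Bin(n,r) ≥ (d+1)/2 (i.e. at least a strict majority among d voters). -/
noncomputable def majTail (d n : ℕ) (r : ℝ) : ℝ :=
  ∑ j ∈ Finset.Icc ((d + 1) / 2) n, binProb n r j

/-- Recursive majority against an adversary on the d-ary tree: `(advMaj d ps h).1` (resp.
`.2`) is the probability that the d-wise recursive majority of the leaf states of the
height-h tree equals 0 given the root state is 0 (resp. 1), where a single site evolves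
down a (d-2)-ary subtree through binary symmetric channels with flip probability ps, and
2 adversarial children per node (together with all their leaves) are fixed to state 1.
With d odd, the node outputs 0 iff at least (d+1)/2 of its d children (of which 2 always
output 1) output 0. -/
noncomputable def advMaj (d : ℕ) (ps : ℝ) : ℕ → ℝ × ℝ
  | 0 => (1, 0)
  | h + 1 =>
      let q := advMaj d ps h
      (majTail d (d - 2) ((1 - ps) * q.1 + ps * q.2),
       majTail d (d - 2) ((1 - ps) * q.2 + ps * q.1))


/-!
Write `θ = 1 - 2 p_s`. If each of the `d - 2` informative children of a node outputs `0`
independently with probability `r ≥ (1 + θ/2)/2`, the node outputs `0` unless `Bin(d-2, r)`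
is at most `(d-1)/2`; the exponential-moment (Chernoff) bound with parameter `1 - θ/2` makes
this happen with probability at most `2/d²` as soon as `θ² d ≥ 48 log d`. Since then also
`2/d² ≤ θ/4`, the bound `1 - 2/d²` on the probability of a correct output is inherited from
height `h` to height `h + 1`: the children then output `0` with probability at least
`(1 - p_s)(1 - 2/d²) ≥ (1 + θ/2)/2`.
-/

open Finset Real

lemma binProb_nonneg {n : ℕ} {r : ℝ} (hr0 : 0 ≤ r) (hr1 : r ≤ 1) (i : ℕ) :
    0 ≤ binProb n r i := by
  have : 0 ≤ 1 - r := by linarith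
  unfold binProb; positivity

lemma sum_pow_mul_binProb (n : ℕ) (r θ : ℝ) :
    ∑ j ∈ range (n + 1), θ ^ j * binProb n r j = (θ * r + (1 - r)) ^ n := by
  rw [add_pow]
  exact sum_congr rfl fun j _ => by unfold binProb; rw [mul_pow]; ring

lemma sum_binProb (n : ℕ) (r : ℝ) : ∑ j ∈ range (n + 1), binProb n r j = 1 := by
  simpa using sum_pow_mul_binProb n r 1

/-- Markov's inequality for `θ ^ X`, `X ~ Bin(n, r)`, at the threshold `X ≤ m - 1`. -/
lemma pow_mul_sum_range_binProb_le {n m : ℕ} {r θ : ℝ} (hθ0 : 0 ≤ θ) (hθ1 : θ ≤ 1)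
    (hr0 : 0 ≤ r) (hr1 : r ≤ 1) (hmn : m ≤ n + 1) :
    θ ^ (m - 1) * ∑ j ∈ range m, binProb n r j ≤ (θ * r + (1 - r)) ^ n := by
  rw [← sum_pow_mul_binProb, mul_sum]
  calc ∑ j ∈ range m, θ ^ (m - 1) * binProb n r j
      ≤ ∑ j ∈ range m, θ ^ j * binProb n r j := by
        refine sum_le_sum fun j hj => mul_le_mul_of_nonneg_right ?_ (binProb_nonneg hr0 hr1 j)
        exact pow_le_pow_of_le_one hθ0 hθ1 (by simp only [mem_range] at hj; omega)
    _ ≤ ∑ j ∈ range (n + 1), θ ^ j * binProb n r j :=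
        sum_le_sum_of_subset_of_nonneg (range_subset_range.2 hmn) fun j _ _ =>
          mul_nonneg (pow_nonneg hθ0 j) (binProb_nonneg hr0 hr1 j)

lemma sum_range_binProb_le_two_mul_exp {a : ℕ} (ha : 1 ≤ a) {δ r : ℝ} (hδ0 : 0 < δ)
    (hδ1 : δ ≤ 1 / 2) (hr : (1 + δ) / 2 ≤ r) (hr1 : r ≤ 1) :
    ∑ j ∈ range (a + 1), binProb (2 * a - 1) r j ≤ 2 * exp (-(a * (δ ^ 2 / 2))) := by
  set L := ∑ j ∈ range (a + 1), binProb (2 * a - 1) r j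
  set u := (1 - δ) * r + (1 - r)
  have hchernoff : (1 - δ) ^ a * L ≤ u ^ (2 * a - 1) := by
    simpa using pow_mul_sum_range_binProb_le (n := 2 * a - 1) (m := a + 1)
      (by linarith : 0 ≤ 1 - δ) (by linarith) (by linarith) hr1 (by omega)
  have hu_half : 1 / 2 ≤ u := by nlinarith
  have hu_sq : u ^ 2 ≤ (1 - δ) * (1 - δ ^ 2 / 2) := by
    have hu : u ≤ 1 - δ / 2 - δ ^ 2 / 2 := by nlinarith
    -- `(1 - δ)(1 - δ²/2) - (1 - δ/2 - δ²/2)² = δ²(1 - δ²)/4`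
    nlinarith [mul_le_mul_of_nonneg_left (by nlinarith : δ ^ 2 ≤ 1) (sq_nonneg δ)]
  have hodd_pow : u ^ (2 * a - 1) ≤ 2 * (u ^ 2) ^ a := by
    have : u ^ (2 * a) = u ^ (2 * a - 1) * u := by rw [← pow_succ]; congr 1; omega
    rw [← pow_mul, this]
    nlinarith [pow_nonneg (by linarith : (0 : ℝ) ≤ u) (2 * a - 1)]
  have hL : L ≤ 2 * (1 - δ ^ 2 / 2) ^ a := by
    have hpos : 0 < (1 - δ) ^ a := pow_pos (by linarith) a
    have : (u ^ 2) ^ a ≤ (1 - δ) ^ a * (1 - δ ^ 2 / 2) ^ a := by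
      rw [← mul_pow]; exact pow_le_pow_left₀ (by positivity) hu_sq a
    nlinarith
  calc L ≤ 2 * (1 - δ ^ 2 / 2) ^ a := hL
    _ ≤ 2 * exp (-(δ ^ 2 / 2)) ^ a := by
        gcongr
        · nlinarith
        · linarith [add_one_le_exp (-(δ ^ 2 / 2))]
    _ = 2 * exp (-(a * (δ ^ 2 / 2))) := by rw [← exp_nat_mul, neg_mul_eq_mul_neg]

lemma majTail_nonneg (d n : ℕ) {r : ℝ} (hr0 : 0 ≤ r) (hr1 : r ≤ 1) : 0 ≤ majTail d n r :=
  sum_nonneg fun j _ => binProb_nonneg hr0 hr1 j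

lemma majTail_le_one (d n : ℕ) {r : ℝ} (hr0 : 0 ≤ r) (hr1 : r ≤ 1) : majTail d n r ≤ 1 := by
  rw [← sum_binProb n r]
  refine sum_le_sum_of_subset_of_nonneg (fun j hj => ?_) fun j _ _ => binProb_nonneg hr0 hr1 j
  simp only [mem_Icc, mem_range] at hj ⊢
  omega

lemma majTail_eq_one_sub_sum_range {a : ℕ} (ha : 1 ≤ a) (r : ℝ) :
    majTail (2 * a + 1) (2 * a - 1) r = 1 - ∑ j ∈ range (a + 1), binProb (2 * a - 1) r j := by
  have hsplit := sum_range_add_sum_Ico (binProb (2 * a - 1) r) (by omega : a + 1 ≤ 2 * a)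
  have hone := sum_binProb (2 * a - 1) r
  rw [show 2 * a - 1 + 1 = 2 * a by omega] at hone
  rw [majTail, show (2 * a + 1 + 1) / 2 = a + 1 by omega, ← Ico_add_one_right_eq_Icc,
    show 2 * a - 1 + 1 = 2 * a by omega]
  linarith

lemma one_sub_two_div_sq_le_majTail {d : ℕ} (hd : Odd d) (hd3 : 3 ≤ d) {δ r : ℝ} (hδ0 : 0 < δ)
    (hδ1 : δ ≤ 1 / 2) (hδd : 12 * log d ≤ δ ^ 2 * d) (hr : (1 + δ) / 2 ≤ r) (hr1 : r ≤ 1) :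
    1 - 2 / (d : ℝ) ^ 2 ≤ majTail d (d - 2) r := by
  obtain ⟨a, rfl⟩ := hd
  have ha : 1 ≤ a := by omega
  have hd0 : (0 : ℝ) < (2 * a + 1 : ℕ) := by positivity
  have hexponent : 2 * log (2 * a + 1 : ℕ) ≤ a * (δ ^ 2 / 2) := by
    have : ((2 * a + 1 : ℕ) : ℝ) ≤ 3 * a := by exact_mod_cast (by omega : 2 * a + 1 ≤ 3 * a)
    nlinarith [sq_nonneg δ]
  have hexp : 2 * exp (-(a * (δ ^ 2 / 2))) ≤ 2 / ((2 * a + 1 : ℕ) : ℝ) ^ 2 := by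
    calc 2 * exp (-(a * (δ ^ 2 / 2))) ≤ 2 * exp (-(2 * log (2 * a + 1 : ℕ))) := by gcongr
      _ = 2 / ((2 * a + 1 : ℕ) : ℝ) ^ 2 := by
        rw [show (2 : ℝ) * log (2 * a + 1 : ℕ) = log (((2 * a + 1 : ℕ) : ℝ) ^ 2) by
          rw [log_pow]; norm_num, exp_neg, exp_log (by positivity), div_eq_mul_inv]
  rw [show 2 * a + 1 - 2 = 2 * a - 1 by omega, majTail_eq_one_sub_sum_range ha]
  linarith [sum_range_binProb_le_two_mul_exp ha hδ0 hδ1 hr hr1]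

lemma advMaj_mem_Icc (d : ℕ) {ps : ℝ} (h0 : 0 ≤ ps) (h1 : ps ≤ 1) :
    ∀ h, (advMaj d ps h).1 ∈ Set.Icc 0 1 ∧ (advMaj d ps h).2 ∈ Set.Icc 0 1
  | 0 => by simp [advMaj]
  | h + 1 => by
    obtain ⟨⟨x0, x1⟩, ⟨y0, y1⟩⟩ := advMaj_mem_Icc d h0 h1 h
    have hr0 : 0 ≤ (1 - ps) * (advMaj d ps h).1 + ps * (advMaj d ps h).2 := by nlinarith
    have hr1 : (1 - ps) * (advMaj d ps h).1 + ps * (advMaj d ps h).2 ≤ 1 := by nlinarith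
    have hs0 : 0 ≤ (1 - ps) * (advMaj d ps h).2 + ps * (advMaj d ps h).1 := by nlinarith
    have hs1 : (1 - ps) * (advMaj d ps h).2 + ps * (advMaj d ps h).1 ≤ 1 := by nlinarith
    exact ⟨⟨majTail_nonneg _ _ hr0 hr1, majTail_le_one _ _ hr0 hr1⟩,
      ⟨majTail_nonneg _ _ hs0 hs1, majTail_le_one _ _ hs0 hs1⟩⟩

lemma one_sub_le_advMaj_fst {d : ℕ} {ps ε : ℝ} (hps0 : 0 ≤ ps) (hps1 : ps ≤ 1 / 2)
    (hε0 : 0 ≤ ε) (hεθ : ε ≤ (1 - 2 * ps) / 4)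
    (hstep : ∀ r, (1 + (1 - 2 * ps) / 2) / 2 ≤ r → r ≤ 1 → 1 - ε ≤ majTail d (d - 2) r) :
    ∀ H, 1 - ε ≤ (advMaj d ps H).1
  | 0 => by simp only [advMaj]; linarith
  | h + 1 => by
    have ih := one_sub_le_advMaj_fst hps0 hps1 hε0 hεθ hstep h
    obtain ⟨⟨-, x1⟩, ⟨y0, y1⟩⟩ := advMaj_mem_Icc d hps0 (by linarith) h
    refine hstep _ ?_ (by nlinarith)
    nlinarith [mul_nonneg hps0 y0, mul_le_mul_of_nonneg_left ih (by linarith : 0 ≤ 1 - ps)]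

lemma one_div_le_of_twelve_mul_log_le {d δ : ℝ} (hd : 2 ≤ d) (hδ : 0 ≤ δ)
    (h : 12 * log d ≤ δ ^ 2 * d) : 1 / d ≤ δ := by
  have hlog : 1 / 2 ≤ log d := by linarith [log_two_gt_d9, log_le_log (by norm_num) hd]
  rw [div_le_iff₀ (by positivity)]
  nlinarith

/-- For every β > 0 there is a constant C'' > 0 such that if
(1-2p_s)² > C''·(log d)/d and d is large enough (and odd), then recursive majority
against an adversary reconstructs the root state 0 correctly with probability at least
1-β, uniformly in the height H. -/
theorem stmt12 (β : ℝ) (hβ : 0 < β) :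
    ∃ C : ℝ, 0 < C ∧ ∃ d₀ : ℕ, ∀ d : ℕ, d₀ ≤ d → Odd d →
      ∀ ps : ℝ, 0 ≤ ps → ps ≤ 1/2 → (1 - 2 * ps) ^ 2 > C * Real.log d / d →
        ∀ H : ℕ, (advMaj d ps H).1 ≥ 1 - β := by
  refine ⟨48, by norm_num, ⌈2 / β⌉₊ + 4, fun d hd hodd ps hps0 hps1 hθ H => ?_⟩
  obtain ⟨δ, hδ⟩ : ∃ δ, δ = (1 - 2 * ps) / 2 := ⟨_, rfl⟩
  have hd4 : (4 : ℝ) ≤ d := by exact_mod_cast (by omega : 4 ≤ d)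
  have hdβ : 2 / β ≤ d := (Nat.le_ceil _).trans (by exact_mod_cast (by omega : ⌈2 / β⌉₊ ≤ d))
  have hδd : 12 * log d ≤ δ ^ 2 * d := by
    have := (div_lt_iff₀ (by positivity)).1 hθ
    rw [hδ]; nlinarith
  have hδ_inv : 1 / (d : ℝ) ≤ δ :=
    one_div_le_of_twelve_mul_log_le (by linarith) (by rw [hδ]; linarith) hδd
  have hδ0 : 0 < δ := lt_of_lt_of_le (by positivity) hδ_inv
  have hεδ : 2 / (d : ℝ) ^ 2 ≤ δ / 2 := by
    rw [div_le_iff₀ (by positivity)]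
    nlinarith [(div_le_iff₀ (by positivity : (0 : ℝ) < d)).1 hδ_inv]
  have hεβ : 2 / (d : ℝ) ^ 2 ≤ β := by
    rw [div_le_iff₀ (by positivity)]
    nlinarith [(div_le_iff₀ hβ).1 hdβ]
  have := one_sub_le_advMaj_fst hps0 hps1 (by positivity) (by linarith) (fun r hr hr1 =>
    one_sub_two_div_sq_le_majTail hodd (by omega) hδ0 (by linarith) hδd (by rwa [hδ]) hr1) H
  linarith
end

section
/- Consider a branching-type process on a d-ary tree of height H where each internal node is independently 'radioactive' with probability at most α. Call a node r-stable if it is not radioactive and at least d-1 of its children are r-stable (leaves are r-stable). If ν* ∈ (0,1) satisfies ν*^d + d·ν*^{d-1}(1-ν*) > ν* and (1-α)·(ν*^d + d·ν*^{d-1}(1-ν*)) ≥ ν*, then the root is the father of a (d-1)-ary stable subtree with probability at least ν*. -/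
open MeasureTheory ProbabilityTheory

/-- `stableAux d H R ω fuel j path` decides whether the node at depth `j` (reached by
`path`) of the d-ary tree of height `H` is stable: leaves (depth H) are stable, and an
internal node is stable iff it is not radioactive (`R` gives the radioactivity
indicators) and at least d-1 of its children are stable. `fuel` bounds the recursion
depth (call with `fuel = H`, `j = 0`). -/
def stableAux {Ω : Type*} (d H : ℕ)
    (R : (Σ j : Fin H, (Fin (j : ℕ) → Fin d)) → Ω → Bool) (ω : Ω) :
    (fuel : ℕ) → (j : ℕ) → (Fin j → Fin d) → Bool
  | 0, _, _ => true
  | fuel + 1, j, path =>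
      if h : j < H then
        !(R ⟨⟨j, h⟩, path⟩ ω) &&
          decide (d - 1 ≤ (Finset.univ.filter fun c : Fin d =>
            stableAux d H R ω fuel (j + 1) (Fin.snoc path c) = true).card)
      else true

/-! By induction on the height. An internal node is stable iff it is not radioactive and at
least `d - 1` of its `d` children are stable. These `d + 1` events are functions of the
radioactivity indicators of pairwise disjoint sets of nodes (the node itself and the `d`
subtrees hanging below it), hence independent. The probability that at most one of `d`
independent events fails is nondecreasing in each of their probabilities, so if every child is
stable with probability at least `ν`, the node is stable with probability at least
`(1 - α) (ν ^ d + d ν ^ (d - 1) (1 - ν)) ≥ ν`. -/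

open Function Finset

lemma sub_one_le_card_filter {d : ℕ} {P : Fin d → Prop} [DecidablePred P]
    (h : #{c | ¬P c} ≤ 1) : d - 1 ≤ #{c | P c} := by
  have := card_filter_add_card_filter_not (s := univ) fun c => P c
  simp only [card_univ, Fintype.card_fin] at this
  omega

noncomputable def atMostOneFailure {d : ℕ} (p : Fin d → ℝ) : ℝ :=
  ∏ c, p c + ∑ c, ∏ c', update p c (1 - p c) c'

lemma atMostOneFailure_cons {d : ℕ} (a : ℝ) (p : Fin d → ℝ) :
    atMostOneFailure (Fin.cons a p : Fin (d + 1) → ℝ)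
      = (1 - a) * ∏ c, p c + a * atMostOneFailure p := by
  simp only [atMostOneFailure, Fin.prod_univ_succ, Fin.sum_univ_succ, Fin.cons_zero,
    Fin.cons_succ, Fin.update_cons_zero, ← Fin.cons_update]
  rw [← mul_sum]
  ring

lemma prod_le_atMostOneFailure {d : ℕ} {p : Fin d → ℝ} (hp0 : ∀ c, 0 ≤ p c)
    (hp1 : ∀ c, p c ≤ 1) : ∏ c, p c ≤ atMostOneFailure p := by
  refine le_add_of_nonneg_right (sum_nonneg fun c _ => prod_nonneg fun c' _ => ?_)
  rcases eq_or_ne c' c with rfl | h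
  · simpa using hp1 c'
  · simpa [h] using hp0 c'

lemma pow_add_mul_pow_le_atMostOneFailure {d : ℕ} {ν : ℝ} (hν : 0 ≤ ν) {p : Fin d → ℝ}
    (hνp : ∀ c, ν ≤ p c) (hp1 : ∀ c, p c ≤ 1) :
    ν ^ d + d * ν ^ (d - 1) * (1 - ν) ≤ atMostOneFailure p := by
  induction d with
  | zero => simp [atMostOneFailure]
  | succ d ih =>
    cases p using Fin.consCases with
    | cons a q =>
      simp only [Fin.forall_fin_succ, Fin.cons_zero, Fin.cons_succ] at hνp hp1
      have hprod : ν ^ d ≤ ∏ c, q c := by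
        simpa using prod_le_prod (s := univ) (fun _ _ => hν) (fun c _ => hνp.2 c)
      have hfail := prod_le_atMostOneFailure (fun c => hν.trans (hνp.2 c)) hp1.2
      have ih' := ih hνp.2 hp1.2
      rw [atMostOneFailure_cons]
      -- the right-hand side is nondecreasing in `a`, as `∏ c, q c ≤ atMostOneFailure q`
      calc ν ^ (d + 1) + (d + 1 : ℕ) * ν ^ (d + 1 - 1) * (1 - ν)
          = (1 - ν) * ν ^ d + ν * (ν ^ d + d * ν ^ (d - 1) * (1 - ν)) := by
            rcases d with _ | d
            · simp
            · simp only [Nat.add_sub_cancel, pow_succ]; push_cast; ring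
        _ ≤ (1 - ν) * ∏ c, q c + ν * atMostOneFailure q := by
            gcongr; linarith [hp1.1, hνp.1]
        _ ≤ (1 - a) * ∏ c, q c + a * atMostOneFailure q := by nlinarith [hνp.1]

namespace ProbabilityTheory

variable {Ω : Type*} {mΩ : MeasurableSpace Ω} {μ : Measure Ω}

theorem iIndepFun.restrict_of_pairwise_disjoint {ι κ β : Type*} [MeasurableSpace β]
    {f : ι → Ω → β} (hf : iIndepFun f μ) (hmeas : ∀ i, Measurable (f i)) {S : κ → Finset ι}
    (hS : Pairwise (Disjoint on S)) :
    iIndepFun (fun k ω (i : S k) => f i ω) μ := by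
  classical
  have := hf.isProbabilityMeasure
  rw [iIndepFun_iff_measure_inter_preimage_eq_mul]
  intro T sets hsets
  induction T using Finset.induction_on with
  | empty => simp
  | insert k T hk ih =>
    rw [set_biInter_insert, prod_insert hk,
      ← ih fun i hi => hsets i (mem_insert_of_mem hi)]
    set U := T.biUnion S
    have hdisj : Disjoint (S k) U :=
      (disjoint_biUnion_right _ _ _).2 fun k' hk' => hS fun h => hk (h ▸ hk')
    let W : Set (U → β) := ⋂ k' : T, (fun x (i : S k') =>
      x ⟨i, mem_biUnion.2 ⟨k', k'.2, i.2⟩⟩) ⁻¹' sets k'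
    have hW : ⋂ k' ∈ T, (fun ω (i : S k') => f i ω) ⁻¹' sets k'
        = (fun ω (i : U) => f i ω) ⁻¹' W := by
      ext ω; simp [W]
    have hWmeas : MeasurableSet W := by
      refine MeasurableSet.iInter fun k' => measurableSet_preimage (by fun_prop) ?_
      exact hsets k' (mem_insert_of_mem k'.2)
    rw [hW]
    exact (hf.indepFun_finset (S k) U hdisj hmeas).measure_inter_preimage_eq_mul _ _
      (hsets k (mem_insert_self k T)) hWmeas

theorem iIndepFun.comp_of_dependsOn {ι κ β γ : Type*} [MeasurableSpace β] [Nonempty β]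
    [MeasurableSpace γ] {f : ι → Ω → β} (hf : iIndepFun f μ) (hmeas : ∀ i, Measurable (f i))
    {S : κ → Finset ι} (hS : Pairwise (Disjoint on S)) {F : κ → (ι → β) → γ}
    (hFm : ∀ k, Measurable (F k)) (hF : ∀ k, DependsOn (F k) (S k)) :
    iIndepFun (fun k ω => F k (fun i => f i ω)) μ := by
  classical
  let extend (k : κ) (x : S k → β) : ι → β := fun i =>
    if h : i ∈ S k then x ⟨i, h⟩ else Classical.arbitrary β
  have hext (k : κ) : Measurable (extend k) := by
    refine measurable_pi_lambda _ fun i => ?_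
    by_cases h : i ∈ S k
    · simpa [extend, h] using measurable_pi_apply _
    · simp [extend, h]
  convert (hf.restrict_of_pairwise_disjoint hmeas hS).comp (fun k x => F k (extend k x))
    fun k => (hFm k).comp (hext k) using 2 with k
  ext ω
  exact hF k fun i hi => by simp [extend, mem_coe.1 hi]

theorem iIndepFun.measureReal_forall_eq {ι β : Type*} [Fintype ι] [MeasurableSpace β]
    [MeasurableSingletonClass β] {X : ι → Ω → β} (hX : iIndepFun X μ) (b : ι → β) :
    μ.real {ω | ∀ i, X i ω = b i} = ∏ i, μ.real {ω | X i ω = b i} := by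
  have h := hX.measure_inter_preimage_eq_mul univ (sets := fun i => {b i})
    fun _ _ => measurableSet_singleton _
  simp only [mem_univ, Set.iInter_true] at h
  have hset : {ω | ∀ i, X i ω = b i} = ⋂ i, X i ⁻¹' {b i} := by ext; simp
  rw [measureReal_def, hset, h, ENNReal.toReal_prod]
  rfl

lemma measureReal_eq_false [IsProbabilityMeasure μ] {X : Ω → Bool} (hX : Measurable X) :
    μ.real {ω | X ω = false} = 1 - μ.real {ω | X ω = true} := by
  have : {ω | X ω = false} = (X ⁻¹' {true})ᶜ := by ext; simp
  rw [this, probReal_compl_eq_one_sub (hX (measurableSet_singleton true))]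
  rfl

theorem mul_atMostOneFailure_le_measureReal {d : ℕ} {Z : Option (Fin d) → Ω → Bool}
    (hZ : iIndepFun Z μ) (hmeas : ∀ o, Measurable (Z o)) :
    μ.real {ω | Z none ω = true} * atMostOneFailure (fun c => μ.real {ω | Z (some c) ω = true})
      ≤ μ.real {ω | Z none ω = true ∧ d - 1 ≤ #{c | Z (some c) ω = true}} := by
  have := hZ.isProbabilityMeasure
  set p := fun c => μ.real {ω | Z (some c) ω = true}
  -- `atom k`: `Z none` holds and exactly the child `k` fails (no child if `k = none`)
  let outcome (k o : Option (Fin d)) : Bool := decide (o = none ∨ o ≠ k)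
  let atom (k : Option (Fin d)) : Set Ω := {ω | ∀ o, Z o ω = outcome k o}
  have hsub : (⋃ k ∈ (univ : Finset _), atom k)
      ⊆ {ω | Z none ω = true ∧ d - 1 ≤ #{c | Z (some c) ω = true}} := by
    simp only [mem_univ, Set.iUnion_true, Set.iUnion_subset_iff]
    intro k ω hω
    refine ⟨by simpa [outcome] using hω none, ?_⟩
    refine sub_one_le_card_filter (card_le_one.2 fun c hc c' hc' => ?_)
    simp only [mem_filter, mem_univ, true_and, Bool.not_eq_true] at hc hc'
    have e : some c = k := by simpa [outcome, hc] using hω (some c)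
    have e' : some c' = k := by simpa [outcome, hc'] using hω (some c')
    exact Option.some_injective _ (e.trans e'.symm)
  have hdisj : ((univ : Finset (Option (Fin d))) : Set (Option (Fin d))).PairwiseDisjoint atom := by
    intro k _ k' _ hne
    refine Set.disjoint_left.2 fun ω hω hω' => hne ?_
    have hk : k = none := by simpa [outcome, hne] using (hω k).symm.trans (hω' k)
    have hk' : k' = none := by simpa [outcome, Ne.symm hne] using (hω k').symm.trans (hω' k')
    exact hk.trans hk'.symm
  have hatom (k : Option (Fin d)) : μ.real (atom k)
      = μ.real {ω | Z none ω = true} * ∏ c, μ.real {ω | Z (some c) ω = outcome k (some c)} := by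
    rw [hZ.measureReal_forall_eq, Fintype.prod_option]
    rfl
  have hfail (c₀ : Fin d) :
      (fun c => μ.real {ω | Z (some c) ω = outcome (some c₀) (some c)})
        = update p c₀ (1 - p c₀) := by
    ext c
    rcases eq_or_ne c c₀ with rfl | h
    · simp [outcome, measureReal_eq_false (hmeas _), p]
    · simp [outcome, h, p]
  calc _ = ∑ k, μ.real (atom k) := by
        simp only [hatom, ← mul_sum, Fintype.sum_option, hfail]
        simp [outcome, atMostOneFailure, p]
    _ = μ.real (⋃ k ∈ (univ : Finset _), atom k) :=
        (measureReal_biUnion_finset hdisj fun k _ => by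
          simp only [atom, Set.ofPred_forall]
          exact MeasurableSet.iInter fun o => hmeas o (measurableSet_singleton _)).symm
    _ ≤ _ := measureReal_mono hsub

end ProbabilityTheory

abbrev TreeNode (d H : ℕ) := Σ j : Fin H, (Fin (j : ℕ) → Fin d)

def subtree (d H : ℕ) {j : ℕ} (path : Fin j → Fin d) : Finset (TreeNode d H) :=
  {v | ∃ h : j ≤ v.1, ∀ k, v.2 (Fin.castLE h k) = path k}

section

variable {d H : ℕ}

lemma mem_subtree {j : ℕ} {path : Fin j → Fin d} {v : TreeNode d H} :
    v ∈ subtree d H path ↔ ∃ h : j ≤ v.1, ∀ k, v.2 (Fin.castLE h k) = path k := by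
  simp [subtree]

lemma node_mem_subtree {j : ℕ} (hj : j < H) (path : Fin j → Fin d) :
    (⟨⟨j, hj⟩, path⟩ : TreeNode d H) ∈ subtree d H path :=
  mem_subtree.2 ⟨le_rfl, fun _ => rfl⟩

lemma node_notMem_subtree_snoc {j : ℕ} (hj : j < H) (path : Fin j → Fin d) (c : Fin d) :
    (⟨⟨j, hj⟩, path⟩ : TreeNode d H) ∉ subtree d H (Fin.snoc path c) :=
  fun hv => Nat.not_succ_le_self j (mem_subtree.1 hv).1

lemma subtree_snoc_subset {j : ℕ} (path : Fin j → Fin d) (c : Fin d) :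
    subtree d H (Fin.snoc path c) ⊆ subtree d H path := by
  intro v hv
  obtain ⟨h, hpath⟩ := mem_subtree.1 hv
  refine mem_subtree.2 ⟨(Nat.le_succ j).trans h, fun k => ?_⟩
  simpa using hpath k.castSucc

lemma disjoint_subtree_snoc {j : ℕ} (path : Fin j → Fin d) {c c' : Fin d} (hc : c ≠ c') :
    Disjoint (subtree d H (Fin.snoc path c)) (subtree d H (Fin.snoc path c')) := by
  refine disjoint_left.2 fun v hv hv' => hc ?_
  obtain ⟨h, hpath⟩ := mem_subtree.1 hv
  obtain ⟨h', hpath'⟩ := mem_subtree.1 hv'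
  simpa using (hpath (Fin.last j)).symm.trans (hpath' (Fin.last j))

lemma stableAux_congr {Ω Ω' : Type*} {R : TreeNode d H → Ω → Bool}
    {R' : TreeNode d H → Ω' → Bool} {ω : Ω} {ω' : Ω'} (fuel : ℕ) {j : ℕ}
    {path : Fin j → Fin d} (h : ∀ v ∈ subtree d H path, R v ω = R' v ω') :
    stableAux d H R ω fuel j path = stableAux d H R' ω' fuel j path := by
  induction fuel generalizing j with
  | zero => rfl
  | succ fuel ih =>
    simp only [stableAux]
    split_ifs with hj
    · rw [h _ (node_mem_subtree hj path)]
      simp only [ih fun v hv => h v (subtree_snoc_subset path _ hv)]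
    · rfl

variable {Ω : Type*} {mΩ : MeasurableSpace Ω} {μ : Measure Ω} {R : TreeNode d H → Ω → Bool}

lemma measurable_stableAux (hmeas : ∀ v, Measurable (R v)) (fuel : ℕ) {j : ℕ}
    (path : Fin j → Fin d) : Measurable fun ω => stableAux d H R ω fuel j path := by
  have : (fun ω => stableAux d H R ω fuel j path)
      = (fun r => stableAux d H (fun v r => r v) r fuel j path) ∘ fun ω v => R v ω :=
    funext fun _ => stableAux_congr fuel fun _ _ => rfl
  rw [this]
  exact Measurable.of_discrete.comp (measurable_pi_lambda _ hmeas)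

theorem iIndepFun_root_and_children (hmeas : ∀ v, Measurable (R v)) (hindep : iIndepFun R μ)
    (fuel : ℕ) {j : ℕ} (hj : j < H) (path : Fin j → Fin d) :
    iIndepFun (fun (o : Option (Fin d)) ω => o.elim (!R ⟨⟨j, hj⟩, path⟩ ω)
      fun c => stableAux d H R ω fuel (j + 1) (Fin.snoc path c)) μ := by
  set n : TreeNode d H := ⟨⟨j, hj⟩, path⟩
  let S (o : Option (Fin d)) : Finset (TreeNode d H) :=
    o.elim {n} fun c => subtree d H (Fin.snoc path c)
  have hS : Pairwise (Disjoint on S) := by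
    rintro (_ | c) (_ | c') hne
    · exact (hne rfl).elim
    · exact disjoint_singleton_left.2 (node_notMem_subtree_snoc hj path c')
    · exact disjoint_singleton_right.2 (node_notMem_subtree_snoc hj path c)
    · exact disjoint_subtree_snoc path fun h => hne (congrArg some h)
  convert hindep.comp_of_dependsOn hmeas hS (fun _ => .of_discrete)
    (F := fun o r => o.elim (!r n) fun c => stableAux d H (fun v r => r v) r fuel (j + 1)
      (Fin.snoc path c)) ?_ using 1
  · ext (_ | c) ω
    · rfl
    · exact stableAux_congr fuel fun _ _ => rfl
  · rintro (_ | c) r r' h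
    · simp [h n (by simp [S])]
    · exact stableAux_congr fuel h

theorem le_measureReal_stableAux {α ν : ℝ} (hν0 : 0 ≤ ν) (hν1 : ν ≤ 1)
    (hrec : ν ≤ (1 - α) * (ν ^ d + d * ν ^ (d - 1) * (1 - ν)))
    (hmeas : ∀ v, Measurable (R v)) (hindep : iIndepFun R μ)
    (hprob : ∀ v, μ.real {ω | R v ω = true} ≤ α) (fuel : ℕ) {j : ℕ} (path : Fin j → Fin d) :
    ν ≤ μ.real {ω | stableAux d H R ω fuel j path = true} := by
  have := hindep.isProbabilityMeasure
  induction fuel generalizing j with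
  | zero => simpa [stableAux] using hν1
  | succ fuel ih =>
    by_cases hj : j < H
    swap
    · simpa [stableAux, hj] using hν1
    set n : TreeNode d H := ⟨⟨j, hj⟩, path⟩
    let Z (o : Option (Fin d)) (ω : Ω) : Bool :=
      o.elim (!R n ω) fun c => stableAux d H R ω fuel (j + 1) (Fin.snoc path c)
    have hZ : iIndepFun Z μ := iIndepFun_root_and_children hmeas hindep fuel hj path
    have hZm : ∀ o, Measurable (Z o) := by
      rintro (_ | c)
      · exact (Measurable.of_discrete (f := not)).comp (hmeas n)
      · exact measurable_stableAux hmeas fuel _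
    have hroot : 1 - α ≤ μ.real {ω | Z none ω = true} := by
      have : {ω | Z none ω = true} = {ω | R n ω = false} := by ext; simp [Z]
      rw [this, measureReal_eq_false (hmeas n)]
      linarith [hprob n]
    have hevent : {ω | stableAux d H R ω (fuel + 1) j path = true}
        = {ω | Z none ω = true ∧ d - 1 ≤ #{c | Z (some c) ω = true}} := by
      ext ω
      simp only [stableAux, dif_pos hj, Bool.and_eq_true, decide_eq_true_eq]
      rfl
    have hg := pow_add_mul_pow_le_atMostOneFailure hν0 (fun c => ih (Fin.snoc path c))
      fun c => measureReal_le_one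
    have hg0 : 0 ≤ ν ^ d + d * ν ^ (d - 1) * (1 - ν) := by
      have : 0 ≤ 1 - ν := by linarith
      positivity
    rw [hevent]
    calc ν ≤ (1 - α) * (ν ^ d + d * ν ^ (d - 1) * (1 - ν)) := hrec
      _ ≤ _ := mul_le_mul hroot hg hg0 measureReal_nonneg
      _ ≤ _ := mul_atMostOneFailure_le_measureReal hZ hZm

end

theorem stmt15_general {Ω : Type*} [MeasureSpace Ω]
    (d H : ℕ) (α νs : ℝ) (hα0 : 0 ≤ α)
    (hνs0 : 0 < νs) (hνs1 : νs < 1)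
    (hrec : (1 - α) * (νs ^ d + d * νs ^ (d - 1) * (1 - νs)) ≥ νs)
    (R : (Σ j : Fin H, (Fin (j : ℕ) → Fin d)) → Ω → Bool)
    (hmeas : ∀ v, Measurable (R v))
    (hindep : iIndepFun R ℙ)
    (hprob : ∀ v, ℙ {ω | R v ω = true} ≤ ENNReal.ofReal α) :
    ℙ {ω | stableAux d H R ω H 0 Fin.elim0 = true} ≥ ENNReal.ofReal νs := by
  have := hindep.isProbabilityMeasure
  rw [ge_iff_le, ← ofReal_measureReal]
  exact ENNReal.ofReal_le_ofReal <| le_measureReal_stableAux hνs0.le hνs1.le hrec hmeas hindep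
    (fun v => ENNReal.toReal_le_of_le_ofReal hα0 (hprob v)) H Fin.elim0

/-- On a d-ary tree of height H where internal nodes are independently
radioactive with probability at most α, if ν* ∈ (0,1) satisfies g(ν*) > ν* and
(1-α)·g(ν*) ≥ ν* where g(ν) = ν^d + dν^{d-1}(1-ν), then the root is the father of a
(d-1)-ary stable subtree with probability at least ν*. -/
theorem stmt15 {Ω : Type*} [MeasureSpace Ω] [IsProbabilityMeasure (ℙ : Measure Ω)]
    (d H : ℕ) (hd : 3 ≤ d) (α νs : ℝ) (hα0 : 0 ≤ α) (hα1 : α ≤ 1)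
    (hνs0 : 0 < νs) (hνs1 : νs < 1)
    (hg : νs ^ d + d * νs ^ (d - 1) * (1 - νs) > νs)
    (hrec : (1 - α) * (νs ^ d + d * νs ^ (d - 1) * (1 - νs)) ≥ νs)
    (R : (Σ j : Fin H, (Fin (j : ℕ) → Fin d)) → Ω → Bool)
    (hmeas : ∀ v, Measurable (R v))
    (hindep : iIndepFun R ℙ)
    (hprob : ∀ v, ℙ {ω | R v ω = true} ≤ ENNReal.ofReal α) :
    ℙ {ω | stableAux d H R ω H 0 Fin.elim0 = true} ≥ ENNReal.ofReal νs :=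
  stmt15_general d H α νs hα0 hνs0 hνs1 hrec R hmeas hindep hprob
end
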